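/- arXiv:0801.4224 — 8 statements merged into one kernel-verified Lean document; each statement's English description precedes it below -/
import Mathlib

section
/- The function π^S(μ) ∝ (1 + (μ-μ₀)²/(μμ₀))^{-1/2} · μ^{-1} on (0,∞) is integrable (so can be normalized to a proper prior), and more generally, for any exponent q, ∫₀^∞ (1 + (μ-μ₀)²/(μμ₀))^{-q} μ^{-1} dμ < ∞ if and only if q > 0. -/
open Real MeasureTheory Set

/-- For the exponential scale model, with `h_q(t) = (1+t)^{-q}`,
`D̄[μ,μ₀] = (μ-μ₀)²/(μμ₀)` and `π^N(μ) = 1/μ`, the integral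
`∫₀^∞ (1 + (μ-μ₀)²/(μμ₀))^{-q} μ^{-1} dμ` is finite if and only if `q > 0`.
In particular the sum-DB kernel (with `q = 1/2`) is integrable. -/
theorem expScale_DB_integrable_iff (μ₀ : ℝ) (hμ₀ : 0 < μ₀) (q : ℝ) :
    IntegrableOn (fun μ : ℝ => (1 + (μ - μ₀)^2 / (μ * μ₀)) ^ (-q) / μ)
      (Set.Ioi 0) ↔ 0 < q := by
  set f : ℝ → ℝ := fun μ : ℝ => (1 + (μ - μ₀)^2 / (μ * μ₀)) ^ (-q) / μ with hf
  have hbase : ∀ μ : ℝ, 0 < μ → 1 ≤ 1 + (μ - μ₀)^2 / (μ * μ₀) := by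
    intro μ hμ
    have : 0 ≤ (μ - μ₀)^2 / (μ * μ₀) :=
      div_nonneg (sq_nonneg _) (mul_pos hμ hμ₀).le
    linarith
  have hcont : ContinuousOn f (Ioi (0:ℝ)) := by
    apply ContinuousOn.div
    · apply ContinuousOn.rpow_const
      · refine continuousOn_const.add (ContinuousOn.div
          (((continuousOn_id.sub continuousOn_const).pow 2))
          (continuousOn_id.mul continuousOn_const) ?_)
        intro x hx
        exact (mul_pos (mem_Ioi.mp hx) hμ₀).ne'
      · intro x hx
        left
        have := hbase x (mem_Ioi.mp hx)
        linarith
    · exact continuousOn_id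
    · intro x hx
      exact (mem_Ioi.mp hx).ne'
  constructor
  · -- integrable → 0 < q
    intro h
    by_contra hq
    push_neg at hq
    have hmono : IntegrableOn (fun μ : ℝ => μ ^ (-1 : ℝ)) (Ioi μ₀) := by
      refine Integrable.mono' (h.mono_set (Ioi_subset_Ioi hμ₀.le)) ?_ ?_
      · exact (continuousOn_id.rpow_const (fun x hx => Or.inl (lt_trans hμ₀ hx).ne')).aestronglyMeasurable measurableSet_Ioi
      · refine (ae_restrict_iff' measurableSet_Ioi).mpr (ae_of_all _ ?_)
        intro μ hμ
        have hμpos : 0 < μ := lt_trans hμ₀ hμ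
        have h1 : (1:ℝ) ≤ (1 + (μ - μ₀)^2 / (μ * μ₀)) ^ (-q) :=
          Real.one_le_rpow (hbase μ hμpos) (by linarith)
        have hle : μ ^ (-1 : ℝ) ≤ f μ := by
          rw [Real.rpow_neg_one]
          rw [hf]
          simp only
          rw [div_eq_mul_inv]
          nth_rewrite 1 [← one_mul μ⁻¹]
          exact mul_le_mul_of_nonneg_right h1 (inv_nonneg.mpr hμpos.le)
        rw [Real.norm_eq_abs, abs_of_nonneg (Real.rpow_nonneg hμpos.le _)]
        exact hle
    have := (integrableOn_Ioi_rpow_iff hμ₀).mp hmono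
    linarith
  · -- 0 < q → integrable
    intro hq
    have hfnn : ∀ μ : ℝ, 0 < μ → 0 ≤ f μ :=
      fun μ hμ => div_nonneg (Real.rpow_nonneg (by linarith [hbase μ hμ]) _) hμ.le
    have hmeas : AEStronglyMeasurable f (volume.restrict (Ioi (0:ℝ))) :=
      hcont.aestronglyMeasurable measurableSet_Ioi
    -- piece 1 : (0, μ₀/2]
    have h1 : IntegrableOn f (Ioc 0 (μ₀/2)) := by
      rw [integrableOn_Ioc_iff_integrableOn_Ioo]
      have hg : IntegrableOn (fun μ : ℝ => (μ₀/4) ^ (-q) * μ ^ (q - 1)) (Ioo 0 (μ₀/2)) :=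
        ((intervalIntegral.integrableOn_Ioo_rpow_iff (by positivity)).mpr (by linarith)).const_mul _
      refine Integrable.mono' hg
        (hmeas.mono_set (fun x hx => hx.1)) ?_
      refine (ae_restrict_iff' measurableSet_Ioo).mpr (ae_of_all _ ?_)
      intro μ hμ
      obtain ⟨hμ0, hμhalf⟩ := hμ
      have hb : μ₀ / (4 * μ) ≤ 1 + (μ - μ₀)^2 / (μ * μ₀) := by
        have h2 : (μ₀/2)^2 ≤ (μ - μ₀)^2 := by nlinarith
        have : μ₀ / (4 * μ) ≤ (μ - μ₀)^2 / (μ * μ₀) := by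
          rw [div_le_div_iff₀ (by positivity) (by positivity)]
          nlinarith
        linarith
      have hrp : (1 + (μ - μ₀)^2 / (μ * μ₀)) ^ (-q) ≤ (μ₀ / (4 * μ)) ^ (-q) :=
        Real.rpow_le_rpow_of_nonpos (by positivity) hb (by linarith)
      have heq : (μ₀ / (4 * μ)) ^ (-q) / μ = (μ₀/4) ^ (-q) * μ ^ (q - 1) := by
        have h4 : μ₀ / (4 * μ) = (μ₀/4) * μ⁻¹ := by
          field_simp
        rw [h4, Real.mul_rpow (by positivity) (by positivity), Real.inv_rpow hμ0.le,
          ← Real.rpow_neg hμ0.le, neg_neg, mul_div_assoc, ← Real.rpow_sub_one hμ0.ne']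
      rw [Real.norm_eq_abs, abs_of_nonneg (hfnn μ hμ0), ← heq]
      exact div_le_div_of_nonneg_right hrp hμ0.le
    -- piece 2 : (μ₀/2, 2μ₀]
    have h2 : IntegrableOn f (Ioc (μ₀/2) (2*μ₀)) := by
      have : IntegrableOn f (Icc (μ₀/2) (2*μ₀)) :=
        (hcont.mono (fun x hx => lt_of_lt_of_le (by positivity) hx.1)).integrableOn_Icc
      exact this.mono_set Ioc_subset_Icc_self
    -- piece 3 : (2μ₀, ∞)
    have h3 : IntegrableOn f (Ioi (2*μ₀)) := by
      have hg : IntegrableOn (fun μ : ℝ => (4*μ₀) ^ q * μ ^ (-q - 1)) (Ioi (2*μ₀)) :=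
        ((integrableOn_Ioi_rpow_iff (by positivity)).mpr (by linarith)).const_mul _
      refine Integrable.mono' hg
        (hmeas.mono_set (fun x hx => lt_trans (by positivity : (0:ℝ) < 2*μ₀) hx)) ?_
      refine (ae_restrict_iff' measurableSet_Ioi).mpr (ae_of_all _ ?_)
      intro μ hμ
      have hμ2 : 2*μ₀ < μ := hμ
      have hμ0 : 0 < μ := lt_trans (by positivity) hμ2
      have hb : μ / (4 * μ₀) ≤ 1 + (μ - μ₀)^2 / (μ * μ₀) := by
        have : μ / (4 * μ₀) ≤ (μ - μ₀)^2 / (μ * μ₀) := by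
          rw [div_le_div_iff₀ (by positivity) (by positivity)]
          nlinarith [mul_nonneg (mul_nonneg (by linarith : (0:ℝ) ≤ μ - 2*μ₀)
            (by linarith : (0:ℝ) ≤ 3*μ - 2*μ₀)) hμ₀.le]
        linarith
      have hrp : (1 + (μ - μ₀)^2 / (μ * μ₀)) ^ (-q) ≤ (μ / (4 * μ₀)) ^ (-q) :=
        Real.rpow_le_rpow_of_nonpos (by positivity) hb (by linarith)
      have heq : (μ / (4 * μ₀)) ^ (-q) / μ = (4*μ₀) ^ q * μ ^ (-q - 1) := by
        have h4 : μ / (4 * μ₀) = (4*μ₀)⁻¹ * μ := by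
          field_simp
        rw [h4, Real.mul_rpow (by positivity) hμ0.le, Real.inv_rpow (by positivity),
          ← Real.rpow_neg (by positivity), neg_neg, mul_div_assoc,
          ← Real.rpow_sub_one hμ0.ne']
      rw [Real.norm_eq_abs, abs_of_nonneg (hfnn μ hμ0), ← heq]
      exact div_le_div_of_nonneg_right hrp hμ0.le
    have hu1 : Ioc (μ₀/2) (2*μ₀) ∪ Ioi (2*μ₀) = Ioi (μ₀/2) :=
      Ioc_union_Ioi_eq_Ioi (by linarith)
    have hu2 : Ioc 0 (μ₀/2) ∪ Ioi (μ₀/2) = Ioi (0:ℝ) :=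
      Ioc_union_Ioi_eq_Ioi (by positivity)
    rw [← hu2, ← hu1]
    exact h1.union (h2.union h3)
end

section
/- The sum-DB prior density for the exponential scale model, π^S(μ) = c^{-1}(1 + (μ-μ₀)²/(μμ₀))^{-1/2} μ^{-1}, has median μ₀ and has no finite mean: ∫₀^∞ μ π^S(μ) dμ = ∞. -/
/-!
The substitution `μ ↦ μ₀² / μ`, i.e. the reflection of `log μ` about `log μ₀`, maps `(μ₀, ∞)`
onto `(0, μ₀)` and preserves the measure `(1 + (μ - μ₀)²/(μμ₀))^{-1/2} μ⁻¹ dμ`, so both halves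
carry the same mass, which is finite because the density is `O(μ^{-3/2})` at infinity. The mean
diverges because `μ` times the density is bounded below by a multiple of `μ^{-1/2}` on `(μ₀, ∞)`.
-/

open Real MeasureTheory Set

section Inversion

variable {E : Type*} [NormedAddCommGroup E] [NormedSpace ℝ E] {a : ℝ}

theorem image_sq_div_Ioi (ha : 0 < a) : (fun x : ℝ => a ^ 2 / x) '' Ioi a = Ioo 0 a := by
  ext y
  simp only [mem_image, mem_Ioi, mem_Ioo]
  constructor
  · rintro ⟨x, hx, rfl⟩
    have hx0 : 0 < x := ha.trans hx
    exact ⟨by positivity, by rw [div_lt_iff₀ hx0]; nlinarith⟩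
  · rintro ⟨hy0, hya⟩
    exact ⟨a ^ 2 / y, by rw [lt_div_iff₀ hy0]; nlinarith, by field_simp⟩

theorem injOn_sq_div_Ioi (ha : 0 < a) : InjOn (fun x : ℝ => a ^ 2 / x) (Ioi a) := by
  intro x hx y hy hxy
  have ha0 := ha.ne'
  have hx0 := (ha.trans hx).ne'
  have hy0 := (ha.trans (mem_Ioi.mp hy)).ne'
  field_simp at hxy
  exact hxy.symm

theorem hasDerivAt_sq_div {x : ℝ} (hx : x ≠ 0) :
    HasDerivAt (fun y : ℝ => a ^ 2 / y) (-(a ^ 2 / x ^ 2)) x := by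
  simpa only [div_eq_mul_inv, mul_neg] using (hasDerivAt_inv hx).const_mul (a ^ 2)

theorem abs_neg_sq_div_sq (x : ℝ) : |-(a ^ 2 / x ^ 2)| = a ^ 2 / x ^ 2 := by
  rw [abs_neg, abs_of_nonneg (by positivity)]

theorem integrableOn_Ioo_zero_iff_sq_div (ha : 0 < a) (f : ℝ → E) :
    IntegrableOn f (Ioo 0 a) ↔
      IntegrableOn (fun x => (a ^ 2 / x ^ 2) • f (a ^ 2 / x)) (Ioi a) := by
  rw [← image_sq_div_Ioi ha, integrableOn_image_iff_integrableOn_abs_deriv_smul measurableSet_Ioi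
    (fun x hx => (hasDerivAt_sq_div (ha.trans hx).ne').hasDerivWithinAt) (injOn_sq_div_Ioi ha)]
  simp only [abs_neg_sq_div_sq]

theorem integral_Ioo_zero_eq_sq_div (ha : 0 < a) (f : ℝ → E) :
    ∫ x in Ioo 0 a, f x = ∫ x in Ioi a, (a ^ 2 / x ^ 2) • f (a ^ 2 / x) := by
  rw [← image_sq_div_Ioi ha, integral_image_eq_integral_abs_deriv_smul measurableSet_Ioi
    (fun x hx => (hasDerivAt_sq_div (ha.trans hx).ne').hasDerivWithinAt) (injOn_sq_div_Ioi ha)]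
  simp only [abs_neg_sq_div_sq]

end Inversion

/-- The sum-DB prior density times its normalising constant: `sumDBKernel μ₀ = c • π^S`. -/
noncomputable def sumDBKernel (μ₀ μ : ℝ) : ℝ := (1 + (μ - μ₀) ^ 2 / (μ * μ₀)) ^ (-(1:ℝ)/2) / μ

section SumDBKernel

variable {μ₀ μ : ℝ}

theorem one_add_sq_div_mul_eq (hμ₀ : μ₀ ≠ 0) (hμ : μ ≠ 0) :
    1 + (μ - μ₀) ^ 2 / (μ * μ₀) = (μ ^ 2 - μ * μ₀ + μ₀ ^ 2) / (μ * μ₀) := by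
  field_simp
  ring

theorem div_le_one_add_sq_div_mul (hμ₀ : 0 < μ₀) (hμ : 0 < μ) :
    μ / (2 * μ₀) ≤ 1 + (μ - μ₀) ^ 2 / (μ * μ₀) := by
  rw [one_add_sq_div_mul_eq hμ₀.ne' hμ.ne', div_le_div_iff₀ (by positivity) (by positivity)]
  nlinarith [sq_nonneg (μ - μ₀), sq_nonneg μ₀, mul_pos hμ hμ₀]

theorem one_add_sq_div_mul_le (hμ₀ : 0 < μ₀) (hμ : μ₀ ≤ μ) :
    1 + (μ - μ₀) ^ 2 / (μ * μ₀) ≤ 2 * μ / μ₀ := by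
  have hμ' : 0 < μ := hμ₀.trans_le hμ
  rw [one_add_sq_div_mul_eq hμ₀.ne' hμ'.ne', div_le_div_iff₀ (by positivity) hμ₀]
  nlinarith [mul_pos hμ' hμ₀]

theorem sumDBKernel_pos (hμ₀ : 0 < μ₀) (hμ : 0 < μ) : 0 < sumDBKernel μ₀ μ :=
  div_pos (rpow_pos_of_pos (by positivity) _) hμ

theorem measurable_sumDBKernel (μ₀ : ℝ) : Measurable (sumDBKernel μ₀) := by
  unfold sumDBKernel
  fun_prop

theorem sq_div_sq_mul_sumDBKernel_sq_div (hμ₀ : μ₀ ≠ 0) (hμ : μ ≠ 0) :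
    μ₀ ^ 2 / μ ^ 2 * sumDBKernel μ₀ (μ₀ ^ 2 / μ) = sumDBKernel μ₀ μ := by
  have hbase : (μ₀ ^ 2 / μ - μ₀) ^ 2 / (μ₀ ^ 2 / μ * μ₀) = (μ - μ₀) ^ 2 / (μ * μ₀) := by
    field_simp
    ring
  unfold sumDBKernel
  rw [hbase]
  field_simp

theorem sumDBKernel_le (hμ₀ : 0 < μ₀) (hμ : 0 < μ) :
    sumDBKernel μ₀ μ ≤ (2 * μ₀) ^ (1/2 : ℝ) * μ ^ (-(3:ℝ)/2) := by
  have hbound : (1 + (μ - μ₀) ^ 2 / (μ * μ₀)) ^ (-(1:ℝ)/2) ≤ (μ / (2 * μ₀)) ^ (-(1:ℝ)/2) :=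
    rpow_le_rpow_of_nonpos (by positivity) (div_le_one_add_sq_div_mul hμ₀ hμ) (by norm_num)
  calc sumDBKernel μ₀ μ ≤ (μ / (2 * μ₀)) ^ (-(1:ℝ)/2) / μ := by
        unfold sumDBKernel; gcongr
    _ = (2 * μ₀) ^ (1/2 : ℝ) * μ ^ (-(3:ℝ)/2) := by
        rw [neg_div, div_rpow hμ.le (by positivity), rpow_neg (by positivity : (0:ℝ) ≤ 2 * μ₀),
          div_inv_eq_mul, show -(3:ℝ)/2 = -(1/2) - 1 by norm_num, rpow_sub_one hμ.ne']
        ring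

theorem rpow_le_mul_sumDBKernel (hμ₀ : 0 < μ₀) (hμ : μ₀ ≤ μ) :
    (2 / μ₀) ^ (-(1:ℝ)/2) * μ ^ (-(1:ℝ)/2) ≤ μ * sumDBKernel μ₀ μ := by
  have hμ' : 0 < μ := hμ₀.trans_le hμ
  rw [← mul_rpow (by positivity) hμ'.le, sumDBKernel, mul_div_cancel₀ _ hμ'.ne']
  exact rpow_le_rpow_of_nonpos (by positivity)
    (by simpa only [mul_div_right_comm] using one_add_sq_div_mul_le hμ₀ hμ) (by norm_num)

theorem integrableOn_sumDBKernel_Ioi (hμ₀ : 0 < μ₀) :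
    IntegrableOn (sumDBKernel μ₀) (Ioi μ₀) := by
  have hdom := (integrableOn_Ioi_rpow_of_lt (a := -(3:ℝ)/2) (by norm_num) hμ₀).const_mul
    ((2 * μ₀) ^ (1/2 : ℝ))
  refine hdom.mono' (measurable_sumDBKernel μ₀).aestronglyMeasurable ?_
  filter_upwards [ae_restrict_mem measurableSet_Ioi] with μ hμ
  have hμ' : 0 < μ := hμ₀.trans hμ
  rw [norm_of_nonneg (sumDBKernel_pos hμ₀ hμ').le]
  exact sumDBKernel_le hμ₀ hμ'

theorem integrableOn_sumDBKernel_Ioo (hμ₀ : 0 < μ₀) :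
    IntegrableOn (sumDBKernel μ₀) (Ioo 0 μ₀) := by
  rw [integrableOn_Ioo_zero_iff_sq_div hμ₀]
  refine (integrableOn_sumDBKernel_Ioi hμ₀).congr_fun (fun μ hμ => ?_) measurableSet_Ioi
  rw [smul_eq_mul, sq_div_sq_mul_sumDBKernel_sq_div hμ₀.ne' (hμ₀.trans hμ).ne']

theorem setIntegral_sumDBKernel_Ioc_eq_Ioi (hμ₀ : 0 < μ₀) :
    ∫ μ in Ioc 0 μ₀, sumDBKernel μ₀ μ = ∫ μ in Ioi μ₀, sumDBKernel μ₀ μ := by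
  rw [integral_Ioc_eq_integral_Ioo, integral_Ioo_zero_eq_sq_div hμ₀]
  refine setIntegral_congr_fun measurableSet_Ioi fun μ hμ => ?_
  rw [smul_eq_mul, sq_div_sq_mul_sumDBKernel_sq_div hμ₀.ne' (hμ₀.trans hμ).ne']

theorem setIntegral_sumDBKernel_Ioi_zero (hμ₀ : 0 < μ₀) :
    ∫ μ in Ioi 0, sumDBKernel μ₀ μ = 2 * ∫ μ in Ioc 0 μ₀, sumDBKernel μ₀ μ := by
  rw [← Ioc_union_Ioi_eq_Ioi hμ₀.le, setIntegral_union (Ioc_disjoint_Ioi le_rfl) measurableSet_Ioi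
    ((integrableOn_Ioc_iff_integrableOn_Ioo).2 (integrableOn_sumDBKernel_Ioo hμ₀))
    (integrableOn_sumDBKernel_Ioi hμ₀), ← setIntegral_sumDBKernel_Ioc_eq_Ioi hμ₀, two_mul]

theorem setIntegral_sumDBKernel_Ioc_pos (hμ₀ : 0 < μ₀) :
    0 < ∫ μ in Ioc 0 μ₀, sumDBKernel μ₀ μ := by
  rw [← intervalIntegral.integral_of_le hμ₀.le]
  refine intervalIntegral.intervalIntegral_pos_of_pos_on ?_
    (fun μ hμ => sumDBKernel_pos hμ₀ hμ.1) hμ₀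
  rw [intervalIntegrable_iff_integrableOn_Ioo_of_le hμ₀.le]
  exact integrableOn_sumDBKernel_Ioo hμ₀

theorem not_integrableOn_mul_sumDBKernel_Ioi (hμ₀ : 0 < μ₀) :
    ¬ IntegrableOn (fun μ => μ * sumDBKernel μ₀ μ) (Ioi μ₀) := by
  intro h
  have hC : IsUnit ((2 / μ₀) ^ (-(1:ℝ)/2)) := (rpow_pos_of_pos (by positivity) _).ne'.isUnit
  have hlower : IntegrableOn (fun μ : ℝ => (2 / μ₀) ^ (-(1:ℝ)/2) * μ ^ (-(1:ℝ)/2)) (Ioi μ₀) := by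
    refine h.mono' (by fun_prop) ?_
    filter_upwards [ae_restrict_mem measurableSet_Ioi] with μ hμ
    have hμ' : 0 < μ := hμ₀.trans hμ
    rw [norm_of_nonneg (by positivity)]
    exact rpow_le_mul_sumDBKernel hμ₀ (le_of_lt hμ)
  rw [IntegrableOn, integrable_const_mul_iff hC, ← IntegrableOn, integrableOn_Ioi_rpow_iff hμ₀]
    at hlower
  norm_num at hlower

end SumDBKernel

/-- The sum-DB prior density for the exponential scale model,
`π^S(μ) = c⁻¹ (1 + (μ-μ₀)²/(μμ₀))^{-1/2} μ^{-1}` on `(0,∞)`, has median `μ₀`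
and no finite mean. -/
theorem expScale_sumDB_median_noMean (μ₀ : ℝ) (hμ₀ : 0 < μ₀) (c : ℝ)
    (hc : c = ∫ μ in Set.Ioi (0:ℝ), (1 + (μ - μ₀)^2 / (μ * μ₀)) ^ (-(1:ℝ)/2) / μ) :
    (∫ μ in Set.Ioc (0:ℝ) μ₀,
        c⁻¹ * ((1 + (μ - μ₀)^2 / (μ * μ₀)) ^ (-(1:ℝ)/2) / μ)) = 1/2 ∧
    ¬ IntegrableOn
        (fun μ : ℝ => μ * (c⁻¹ * ((1 + (μ - μ₀)^2 / (μ * μ₀)) ^ (-(1:ℝ)/2) / μ)))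
        (Set.Ioi 0) := by
  have hc_eq : c = 2 * ∫ μ in Ioc 0 μ₀, sumDBKernel μ₀ μ :=
    hc.trans (setIntegral_sumDBKernel_Ioi_zero hμ₀)
  have hhalf_pos := setIntegral_sumDBKernel_Ioc_pos hμ₀
  refine ⟨?_, fun hmean => not_integrableOn_mul_sumDBKernel_Ioi hμ₀ ?_⟩
  · change ∫ μ in Ioc 0 μ₀, c⁻¹ * sumDBKernel μ₀ μ = 1 / 2
    rw [integral_const_mul, hc_eq]
    field_simp
  · have hc_unit : IsUnit c⁻¹ := (inv_pos.2 (by linarith)).ne'.isUnit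
    have h := hmean.mono_set (Ioi_subset_Ioi hμ₀.le)
    simp_rw [mul_left_comm _ c⁻¹] at h
    rwa [IntegrableOn, integrable_const_mul_iff hc_unit] at h
end

section
/- (Evidence consistency for exponential scale testing.) Let π be a probability density on (0,∞) and for data with sample mean ȳ and sample size n define B₁₂(ȳ) = μ₀^{-n} e^{-nȳ/μ₀} / ∫₀^∞ μ^{-n} e^{-nȳ/μ} π(μ) dμ. Then for all n ≥ k > 0, B₁₂(ȳ) → 0 as ȳ → 0⁺ if and only if ∫₀^1 μ^{-k} π(μ) dμ = ∞. -/
/-!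
Write `L n = ∫₀^∞ μ^{-n} π(μ) dμ ∈ [0, ∞]`. As `ȳ ↓ 0` the weights `e^{-nȳ/μ}` increase to `1`,
so by monotone convergence the denominator of `B₁₂` tends to `L n`, while the numerator tends to
`μ₀^{-n} > 0`. Since `π` is integrable and `μ^{-n} ≤ 1` on `(1, ∞)`, `L n` is finite exactly when
`∫₀^1 μ^{-n} π(μ) dμ` is. If it is finite for `n = k`, then `B₁₂ → μ₀^{-k} / L k > 0`. If it is
infinite, it is infinite for all `n ≥ k`, the denominator tends to `∞` (it is finite for `ȳ > 0`
because `x^n e^{-x} ≤ n!`), and `B₁₂ → 0`.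
-/

open Real MeasureTheory Set Filter
open scoped ENNReal Topology Nat

theorem exp_neg_div_div_pow_le {t μ : ℝ} (ht : 0 < t) (hμ : 0 < μ) (n : ℕ) :
    exp (-t / μ) / μ ^ n ≤ n ! / t ^ n := by
  have h := pow_div_factorial_le_exp _ (div_pos ht hμ).le n
  rw [div_pow, div_div, div_le_iff₀ (by positivity)] at h
  rw [neg_div, exp_neg, div_le_div_iff₀ (by positivity) (by positivity),
    inv_mul_le_iff₀ (exp_pos _)]
  linarith

theorem tendsto_setLIntegral_exp_neg_div_mul (ν : Measure ℝ) {g : ℝ → ℝ≥0∞}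
    (hg : AEMeasurable g (ν.restrict (Ioi 0))) :
    Tendsto (fun t => ∫⁻ μ in Ioi 0, ENNReal.ofReal (exp (-t / μ)) * g μ ∂ν) (𝓝[>] 0)
      (𝓝 (∫⁻ μ in Ioi 0, g μ ∂ν)) := by
  set G := fun t => ∫⁻ μ in Ioi 0, ENNReal.ofReal (exp (-t / μ)) * g μ ∂ν
  have hanti : Antitone G := fun s t hst =>
    setLIntegral_mono' measurableSet_Ioi fun μ (hμ : 0 < μ) => by gcongr
  have hseq : Tendsto (fun m : ℕ => 1 / ((m : ℝ) + 1)) atTop (𝓝[>] 0) :=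
    tendsto_nhdsWithin_iff.2 ⟨tendsto_one_div_add_atTop_nhds_zero_nat,
      Eventually.of_forall fun m => mem_Ioi.2 (by positivity)⟩
  have hmct :
      Tendsto (fun m : ℕ => G (1 / ((m : ℝ) + 1))) atTop (𝓝 (∫⁻ μ in Ioi 0, g μ ∂ν)) := by
    refine lintegral_tendsto_of_tendsto_of_monotone (fun m => ?_) ?_ ?_
    · exact (ENNReal.measurable_ofReal.comp (by fun_prop)).aemeasurable.mul hg
    · filter_upwards [ae_restrict_mem measurableSet_Ioi] with μ (hμ : 0 < μ) i j hij
      have hji : 1 / ((j : ℝ) + 1) ≤ 1 / ((i : ℝ) + 1) := by gcongr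
      dsimp only
      gcongr
    · filter_upwards with μ
      have h := ((ENNReal.continuous_ofReal.comp (by fun_prop :
        Continuous fun t : ℝ => exp (-t / μ))).tendsto 0).comp
          tendsto_one_div_add_atTop_nhds_zero_nat
      simpa using ENNReal.Tendsto.mul_const h (.inl (by simp))
  have hsup := tendsto_nhds_unique ((hanti.tendsto_nhdsGT 0).comp hseq) hmct
  simpa only [hsup] using hanti.tendsto_nhdsGT 0

theorem ENNReal.tendsto_toReal_atTop_of_tendsto_top {α : Type*} {l : Filter α} {f : α → ℝ≥0∞}
    (hf : ∀ᶠ x in l, f x ≠ ∞) (h : Tendsto f l (𝓝 ∞)) :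
    Tendsto (fun x => (f x).toReal) l atTop :=
  ENNReal.tendsto_ofReal_nhds_top.1 <|
    h.congr' (hf.mono fun _ hx => (ENNReal.ofReal_toReal hx).symm)

theorem tendsto_const_mul_nhdsGT_zero {x : ℝ} (hx : 0 < x) :
    Tendsto (x * ·) (𝓝[>] 0) (𝓝[>] 0) :=
  tendsto_iff_comap.2 (comap_mulLeft_nhdsGT_zero hx).ge

theorem setIntegral_rpow_neg_mul_exp_neg_div_mul {f : ℝ → ℝ} (hf0 : ∀ μ, 0 ≤ f μ)
    (hfm : AEMeasurable f (volume.restrict (Ioi 0))) (n : ℕ) (t : ℝ) :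
    ∫ μ in Ioi 0, μ ^ (-(n : ℝ)) * exp (-t / μ) * f μ =
      (∫⁻ μ in Ioi 0, ENNReal.ofReal (exp (-t / μ)) * ENNReal.ofReal (f μ / μ ^ n)).toReal := by
  have hpow : EqOn (fun μ => μ ^ (-(n : ℝ)) * exp (-t / μ) * f μ)
      (fun μ => exp (-t / μ) * (f μ / μ ^ n)) (Ioi 0) :=
    fun μ (hμ : 0 < μ) => by simp only [rpow_neg hμ.le, rpow_natCast]; ring
  rw [setIntegral_congr_fun measurableSet_Ioi hpow, integral_eq_lintegral_of_nonneg_ae]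
  · refine congrArg _ (setLIntegral_congr_fun measurableSet_Ioi fun μ _ => ?_)
    exact ENNReal.ofReal_mul (exp_pos _).le
  · filter_upwards [ae_restrict_mem measurableSet_Ioi] with μ (hμ : 0 < μ)
    exact mul_nonneg (exp_pos _).le (div_nonneg (hf0 μ) (pow_nonneg hμ.le n))
  · exact (by fun_prop : AEMeasurable _ _).aestronglyMeasurable

theorem setLIntegral_exp_neg_div_mul_ne_top {f : ℝ → ℝ} (hf : IntegrableOn f (Ioi 0))
    (hf0 : ∀ μ, 0 ≤ f μ) (n : ℕ) {t : ℝ} (ht : 0 < t) :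
    ∫⁻ μ in Ioi 0, ENNReal.ofReal (exp (-t / μ)) * ENNReal.ofReal (f μ / μ ^ n) ≠ ∞ := by
  have hbound : ∀ μ ∈ Ioi (0 : ℝ),
      ENNReal.ofReal (exp (-t / μ)) * ENNReal.ofReal (f μ / μ ^ n) ≤
        ENNReal.ofReal (n ! / t ^ n) * ENNReal.ofReal (f μ) := fun μ (hμ : 0 < μ) => by
    rw [← ENNReal.ofReal_mul (exp_pos _).le, ← ENNReal.ofReal_mul (by positivity)]
    refine ENNReal.ofReal_le_ofReal ?_
    rw [← mul_div_assoc, mul_div_right_comm]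
    exact mul_le_mul_of_nonneg_right (exp_neg_div_div_pow_le ht hμ n) (hf0 μ)
  refine ne_top_of_le_ne_top ?_ (setLIntegral_mono' measurableSet_Ioi hbound)
  rw [lintegral_const_mul' _ _ ENNReal.ofReal_ne_top]
  exact ENNReal.mul_ne_top ENNReal.ofReal_ne_top hf.lintegral_lt_top.ne

theorem integrableOn_Ioi_div_pow_iff {f : ℝ → ℝ} (hf : IntegrableOn f (Ioi 0)) (n : ℕ) :
    IntegrableOn (fun μ => f μ / μ ^ n) (Ioi 0) ↔
      IntegrableOn (fun μ => f μ / μ ^ n) (Ioc 0 1) := by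
  refine ⟨fun h => h.mono_set Ioc_subset_Ioi_self, fun h => ?_⟩
  have hf1 : IntegrableOn f (Ioi 1) := hf.mono_set (Ioi_subset_Ioi zero_le_one)
  have hm : AEMeasurable f (volume.restrict (Ioi 1)) := hf1.aemeasurable
  rw [← Ioc_union_Ioi_eq_Ioi zero_le_one]
  refine h.union (hf1.norm.mono' (by fun_prop : AEMeasurable _ _).aestronglyMeasurable ?_)
  filter_upwards [ae_restrict_mem measurableSet_Ioi] with μ (hμ : 1 < μ)
  rw [norm_div, norm_pow]
  rw [norm_of_nonneg (by linarith : (0 : ℝ) ≤ μ)]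
  exact div_le_self (norm_nonneg _) (one_le_pow₀ hμ.le)

theorem setLIntegral_ofReal_div_pow_ne_top_iff {f : ℝ → ℝ} (hf : IntegrableOn f (Ioi 0))
    (hf0 : ∀ μ, 0 ≤ f μ) (n : ℕ) :
    ∫⁻ μ in Ioi 0, ENNReal.ofReal (f μ / μ ^ n) ≠ ∞ ↔
      IntegrableOn (fun μ => f μ / μ ^ n) (Ioc 0 1) := by
  have hm : AEMeasurable f (volume.restrict (Ioi 0)) := hf.aemeasurable
  rw [← integrableOn_Ioi_div_pow_iff hf, IntegrableOn,
    lintegral_ofReal_ne_top_iff_integrable (by fun_prop : AEMeasurable _ _).aestronglyMeasurable]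
  filter_upwards [ae_restrict_mem measurableSet_Ioi] with μ (hμ : 0 < μ)
  exact div_nonneg (hf0 μ) (pow_nonneg hμ.le n)

theorem IntegrableOn.div_pow_of_le {f : ℝ → ℝ} {k n : ℕ} (hkn : k ≤ n)
    (h : IntegrableOn (fun μ => f μ / μ ^ n) (Ioc 0 1)) :
    IntegrableOn (fun μ => f μ / μ ^ k) (Ioc 0 1) := by
  obtain ⟨d, rfl⟩ := Nat.exists_eq_add_of_le hkn
  have hprod : EqOn (fun μ => f μ / μ ^ (k + d) * μ ^ d) (fun μ => f μ / μ ^ k) (Ioc 0 1) :=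
    fun μ hμ => by field_simp [hμ.1.ne']; ring
  refine IntegrableOn.congr_fun ?_ hprod measurableSet_Ioc
  refine h.mul_bdd (c := 1) (by fun_prop : Continuous fun μ : ℝ => μ ^ d).aestronglyMeasurable ?_
  filter_upwards [ae_restrict_mem measurableSet_Ioc] with μ hμ
  rw [norm_pow, norm_of_nonneg hμ.1.le]
  exact pow_le_one₀ hμ.1.le hμ.2

theorem setLIntegral_ofReal_div_pow_ne_zero {f : ℝ → ℝ} (hf0 : ∀ μ, 0 ≤ f μ)
    (hfm : AEMeasurable f (volume.restrict (Ioi 0))) (hf : ∫ μ in Ioi 0, f μ ≠ 0) (n : ℕ) :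
    ∫⁻ μ in Ioi 0, ENNReal.ofReal (f μ / μ ^ n) ≠ 0 := by
  contrapose! hf
  rw [lintegral_eq_zero_iff' (by fun_prop)] at hf
  refine integral_eq_zero_of_ae ?_
  filter_upwards [hf, ae_restrict_mem measurableSet_Ioi] with μ hμ (hμ0 : 0 < μ)
  have := (div_le_iff₀ (pow_pos hμ0 n)).1 (ENNReal.ofReal_eq_zero.1 hμ)
  exact le_antisymm (by simpa using this) (hf0 μ)

theorem evidence_consistency_expScale_general (μ₀ : ℝ) (hμ₀ : 0 < μ₀) (pr : ℝ → ℝ)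
    (hpr0 : ∀ μ, 0 ≤ pr μ)
    (hpr1 : (∫ μ in Set.Ioi (0:ℝ), pr μ) = 1) (k : ℕ) (hk : 0 < k) :
    (∀ n : ℕ, k ≤ n →
      Tendsto (fun ybar : ℝ =>
          (μ₀ ^ (-(n:ℝ)) * Real.exp (-((n:ℝ) * ybar) / μ₀)) /
            ∫ μ in Set.Ioi (0:ℝ), μ ^ (-(n:ℝ)) * Real.exp (-((n:ℝ) * ybar) / μ) * pr μ)
        (nhdsWithin 0 (Set.Ioi 0)) (nhds 0)) ↔
    ¬ IntegrableOn (fun μ : ℝ => pr μ / μ ^ k) (Set.Ioc 0 1) := by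
  have hne : ∫ μ in Ioi 0, pr μ ≠ 0 := by rw [hpr1]; exact one_ne_zero
  have hpr : IntegrableOn pr (Ioi 0) := Integrable.of_integral_ne_zero hne
  have hden (n : ℕ) (hn : 0 < n) : Tendsto (fun y : ℝ => ∫⁻ μ in Ioi 0,
      ENNReal.ofReal (exp (-(n * y) / μ)) * ENNReal.ofReal (pr μ / μ ^ n)) (𝓝[>] 0)
      (𝓝 (∫⁻ μ in Ioi 0, ENNReal.ofReal (pr μ / μ ^ n))) :=
    (tendsto_setLIntegral_exp_neg_div_mul volume
      (hpr.aemeasurable.div (by fun_prop)).ennreal_ofReal).comp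
        (tendsto_const_mul_nhdsGT_zero (Nat.cast_pos.2 hn))
  have hnum (n : ℕ) : Tendsto (fun y : ℝ => μ₀ ^ (-(n : ℝ)) * exp (-(n * y) / μ₀)) (𝓝[>] 0)
      (𝓝 (μ₀ ^ (-(n : ℝ)))) := by
    have hcont : Continuous fun y : ℝ => μ₀ ^ (-(n : ℝ)) * exp (-(n * y) / μ₀) := by fun_prop
    simpa using (hcont.tendsto 0).mono_left nhdsWithin_le_nhds
  simp only [setIntegral_rpow_neg_mul_exp_neg_div_mul hpr0 hpr.aemeasurable]
  constructor
  · intro hB hint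
    have hfin := (setLIntegral_ofReal_div_pow_ne_top_iff hpr hpr0 k).2 hint
    have hpos := ENNReal.toReal_pos
      (setLIntegral_ofReal_div_pow_ne_zero hpr0 hpr.aemeasurable hne k) hfin
    have hlim := (hnum k).div ((ENNReal.tendsto_toReal hfin).comp (hden k hk)) hpos.ne'
    exact (div_pos (rpow_pos_of_pos hμ₀ _) hpos).ne' (tendsto_nhds_unique hlim (hB k le_rfl))
  · intro hdiv n hkn
    have hn : 0 < n := hk.trans_le hkn
    have htop : ∫⁻ μ in Ioi 0, ENNReal.ofReal (pr μ / μ ^ n) = ∞ := by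
      by_contra h
      exact hdiv <| IntegrableOn.div_pow_of_le hkn <|
        (setLIntegral_ofReal_div_pow_ne_top_iff hpr hpr0 n).1 h
    refine (hnum n).div_atTop (ENNReal.tendsto_toReal_atTop_of_tendsto_top ?_ (htop ▸ hden n hn))
    filter_upwards [self_mem_nhdsWithin] with y (hy : 0 < y)
    exact setLIntegral_exp_neg_div_mul_ne_top hpr hpr0 n (by positivity)

/-- Evidence consistency for exponential scale testing: with prior density `pr` on
`(0,∞)`, the Bayes factor
`B₁₂(ybar) = μ₀^{-n} e^{-nybar/μ₀} / ∫₀^∞ μ^{-n} e^{-nybar/μ} pr(μ) dμ`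
tends to `0` as `ybar → 0⁺` for all `n ≥ k > 0` if and only if
`∫₀^1 μ^{-k} pr(μ) dμ = ∞`. -/
theorem evidence_consistency_expScale (μ₀ : ℝ) (hμ₀ : 0 < μ₀) (pr : ℝ → ℝ)
    (hpr0 : ∀ μ, 0 ≤ pr μ) (hprm : Measurable pr)
    (hpr1 : (∫ μ in Set.Ioi (0:ℝ), pr μ) = 1) (k : ℕ) (hk : 0 < k) :
    (∀ n : ℕ, k ≤ n →
      Tendsto (fun ybar : ℝ =>
          (μ₀ ^ (-(n:ℝ)) * Real.exp (-((n:ℝ) * ybar) / μ₀)) /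
            ∫ μ in Set.Ioi (0:ℝ), μ ^ (-(n:ℝ)) * Real.exp (-((n:ℝ) * ybar) / μ) * pr μ)
        (nhdsWithin 0 (Set.Ioi 0)) (nhds 0)) ↔
    ¬ IntegrableOn (fun μ : ℝ => pr μ / μ ^ k) (Set.Ioc 0 1) :=
  evidence_consistency_expScale_general μ₀ hμ₀ pr hpr0 hpr1 k hk
end

section
/- The conjectured arithmetic intrinsic prior π^A(θ) = -e^{θ-θ₀} log(1 - e^{θ₀-θ}) - 1 for θ > θ₀ is a probability density: it is positive, decreasing, unbounded near θ₀, and ∫_{θ₀}^∞ π^A(θ) dθ = 1. -/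
/-!
Substitute `u = e^{θ₀-θ}`, which decreases from `1` to `0` on `(θ₀, ∞)`; the prior becomes
`-log(1-u)/u - 1`. Positivity and monotonicity in `u` are the inequalities
`u < -log(1-u) < u/(1-u)`, and the blow-up at `θ₀` is `log(1-u) → -∞` as `u → 1`.
The density has the explicit antiderivative `-(1-u) log(1-u)/u`, which vanishes at `u = 1` and
tends to `1` as `u → 0` (the slope of `-log(1-u)` at `0`), so the total mass is `1`.
-/

open Real MeasureTheory Set Filter Topology

lemma Real.log_one_sub_lt_neg {u : ℝ} (hu₀ : u ≠ 0) (hu₁ : u < 1) : log (1 - u) < -u := by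
  linarith [log_lt_sub_one_of_pos (x := 1 - u) (by linarith) (by contrapose! hu₀; linarith)]

lemma Real.neg_div_one_sub_lt_log_one_sub {u : ℝ} (hu₀ : u ≠ 0) (hu₁ : u < 1) :
    -u / (1 - u) < log (1 - u) := by
  have hpos : 0 < 1 - u := by linarith
  have h := log_lt_sub_one_of_pos (inv_pos.2 hpos)
    (by rw [Ne, inv_eq_one]; contrapose! hu₀; linarith)
  rw [log_inv, inv_eq_one_div, div_sub_one hpos.ne', sub_sub_cancel] at h
  rw [neg_div]
  linarith

lemma Real.tendsto_one_sub_nhdsLT_one : Tendsto (fun u : ℝ => 1 - u) (𝓝[<] 1) (𝓝[>] 0) := by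
  refine tendsto_nhdsWithin_iff.2 ⟨?_, eventually_nhdsWithin_of_forall fun u hu => ?_⟩
  · exact ((continuous_sub_left (1 : ℝ)).tendsto' 1 0 (sub_self 1)).mono_left nhdsWithin_le_nhds
  · exact mem_Ioi.2 (sub_pos.2 hu)

lemma Real.exp_const_sub_mem_Ioo {θ₀ θ : ℝ} (h : θ₀ < θ) : exp (θ₀ - θ) ∈ Ioo 0 1 :=
  ⟨exp_pos _, exp_lt_one_iff.2 (sub_neg.2 h)⟩

lemma Real.strictAnti_exp_const_sub (θ₀ : ℝ) : StrictAnti fun θ => exp (θ₀ - θ) :=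
  fun _ _ h => exp_lt_exp.2 (sub_lt_sub_left h θ₀)

lemma Real.tendsto_exp_const_sub_nhdsGT (θ₀ : ℝ) :
    Tendsto (fun θ => exp (θ₀ - θ)) (𝓝[>] θ₀) (𝓝[<] 1) := by
  refine tendsto_nhdsWithin_iff.2 ⟨?_, eventually_nhdsWithin_of_forall fun θ hθ => ?_⟩
  · have : Continuous fun θ => exp (θ₀ - θ) := by fun_prop
    simpa using (this.tendsto θ₀).mono_left nhdsWithin_le_nhds
  · exact (exp_const_sub_mem_Ioo hθ).2

lemma Real.tendsto_exp_const_sub_atTop (θ₀ : ℝ) :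
    Tendsto (fun θ => exp (θ₀ - θ)) atTop (𝓝[>] 0) :=
  tendsto_exp_atBot_nhdsGT.comp (tendsto_atBot_add_const_left _ θ₀ tendsto_neg_atTop_atBot)

/-- The arithmetic intrinsic prior `π^A` in the variable `u = e^{θ₀-θ} ∈ (0,1)`. -/
noncomputable def arithmeticPrior (u : ℝ) : ℝ := -u⁻¹ * log (1 - u) - 1

/-- In the same variable, the mass `∫_{θ₀}^{θ} π^A` of the prior. -/
noncomputable def arithmeticPriorCDF (u : ℝ) : ℝ := u⁻¹ * negMulLog (1 - u)

lemma arithmeticPrior_pos {u : ℝ} (hu₀ : 0 < u) (hu₁ : u < 1) : 0 < arithmeticPrior u := by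
  have h := mul_lt_mul_of_pos_left (log_one_sub_lt_neg hu₀.ne' hu₁) (inv_pos.2 hu₀)
  rw [mul_neg, inv_mul_cancel₀ hu₀.ne'] at h
  rw [arithmeticPrior, neg_mul]
  linarith

lemma hasDerivAt_arithmeticPrior {u : ℝ} (hu₀ : u ≠ 0) (hu₁ : u ≠ 1) :
    HasDerivAt arithmeticPrior ((log (1 - u) + u / (1 - u)) / u ^ 2) u := by
  have hu₁' : 1 - u ≠ 0 := sub_ne_zero.2 hu₁.symm
  have hlog : HasDerivAt (fun x : ℝ => log (1 - x)) (-1 / (1 - u)) u := by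
    simpa using ((hasDerivAt_id u).const_sub 1).log hu₁'
  refine (((hasDerivAt_inv hu₀).neg.mul hlog).sub_const 1).congr_deriv ?_
  simp only [Pi.neg_apply]
  field_simp

lemma strictMonoOn_arithmeticPrior : StrictMonoOn arithmeticPrior (Ioo 0 1) := by
  have hderiv : ∀ u ∈ Ioo (0 : ℝ) 1, HasDerivAt arithmeticPrior _ u := fun u hu =>
    hasDerivAt_arithmeticPrior hu.1.ne' hu.2.ne
  refine strictMonoOn_of_hasDerivWithinAt_pos (convex_Ioo 0 1)
    (fun u hu => (hderiv u hu).continuousAt.continuousWithinAt)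
    (fun u hu => (hderiv u (interior_subset hu)).hasDerivWithinAt) fun u hu => ?_
  rw [interior_Ioo] at hu
  have := neg_div_one_sub_lt_log_one_sub hu.1.ne' hu.2
  rw [neg_div] at this
  exact div_pos (by linarith) (pow_pos hu.1 2)

lemma tendsto_arithmeticPrior_nhdsLT_one : Tendsto arithmeticPrior (𝓝[<] 1) atTop := by
  have hlog : Tendsto (fun u : ℝ => -log (1 - u)) (𝓝[<] 1) atTop :=
    tendsto_neg_atBot_atTop.comp (tendsto_log_nhdsGT_zero.comp tendsto_one_sub_nhdsLT_one)
  have hinv : Tendsto (fun u : ℝ => u⁻¹) (𝓝[<] 1) (𝓝 1) := by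
    simpa using (continuousAt_inv₀ (one_ne_zero (α := ℝ))).tendsto.mono_left nhdsWithin_le_nhds
  refine (tendsto_atTop_add_const_right _ (-1) (hinv.pos_mul_atTop one_pos hlog)).congr fun u => ?_
  rw [arithmeticPrior, neg_mul_comm, ← sub_eq_add_neg]

lemma hasDerivAt_arithmeticPriorCDF {u : ℝ} (hu₀ : u ≠ 0) (hu₁ : u ≠ 1) :
    HasDerivAt arithmeticPriorCDF (-arithmeticPrior u / u) u := by
  have hu₁' : 1 - u ≠ 0 := sub_ne_zero.2 hu₁.symm
  have hent : HasDerivAt (fun x => negMulLog (1 - x)) (1 + log (1 - u)) u := by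
    simpa using (hasDerivAt_negMulLog hu₁').comp_const_sub 1 u
  refine ((hasDerivAt_inv hu₀).mul hent).congr_deriv ?_
  simp only [arithmeticPrior, negMulLog]
  field_simp
  ring

lemma continuousAt_arithmeticPriorCDF_one : ContinuousAt arithmeticPriorCDF 1 := by
  unfold arithmeticPriorCDF
  fun_prop (disch := norm_num)

lemma tendsto_arithmeticPriorCDF_nhdsGT_zero :
    Tendsto arithmeticPriorCDF (𝓝[>] 0) (𝓝 1) := by
  have h : HasDerivAt (fun u => negMulLog (1 - u)) 1 0 := by
    simpa using (hasDerivAt_negMulLog (x := 1 - 0) (by norm_num)).comp_const_sub 1 0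
  refine ((hasDerivAt_iff_tendsto_slope.1 h).mono_left
    (nhdsWithin_mono _ fun u hu => ne_of_gt hu)).congr fun u => ?_
  simp [slope_def_field, arithmeticPriorCDF, div_eq_inv_mul]

lemma arithmeticPrior_exp_const_sub (θ₀ θ : ℝ) :
    arithmeticPrior (exp (θ₀ - θ)) = -exp (θ - θ₀) * log (1 - exp (θ₀ - θ)) - 1 := by
  rw [arithmeticPrior, ← exp_neg, neg_sub]

lemma hasDerivAt_arithmeticPriorCDF_exp_const_sub {θ₀ θ : ℝ} (h : θ₀ < θ) :
    HasDerivAt (fun θ => arithmeticPriorCDF (exp (θ₀ - θ)))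
      (arithmeticPrior (exp (θ₀ - θ))) θ := by
  obtain ⟨hu₀, hu₁⟩ := exp_const_sub_mem_Ioo h
  have hexp : HasDerivAt (fun θ => exp (θ₀ - θ)) (-exp (θ₀ - θ)) θ := by
    simpa using ((hasDerivAt_id θ).const_sub θ₀).exp
  refine ((hasDerivAt_arithmeticPriorCDF hu₀.ne' hu₁.ne).comp θ hexp).congr_deriv ?_
  field_simp

lemma integral_arithmeticPrior_exp_const_sub (θ₀ : ℝ) :
    ∫ θ in Ioi θ₀, arithmeticPrior (exp (θ₀ - θ)) = 1 := by
  have hcont :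
      ContinuousWithinAt (fun θ => arithmeticPriorCDF (exp (θ₀ - θ))) (Ici θ₀) θ₀ :=
    (continuousAt_arithmeticPriorCDF_one.comp_of_eq (by fun_prop) (by simp)).continuousWithinAt
  rw [integral_Ioi_of_hasDerivAt_of_nonneg hcont
    (fun θ hθ => hasDerivAt_arithmeticPriorCDF_exp_const_sub hθ)
    (fun θ hθ => (arithmeticPrior_pos (exp_const_sub_mem_Ioo hθ).1
      (exp_const_sub_mem_Ioo hθ).2).le)
    (tendsto_arithmeticPriorCDF_nhdsGT_zero.comp (tendsto_exp_const_sub_atTop θ₀))]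
  simp [arithmeticPriorCDF]

/-- The conjectured arithmetic intrinsic prior
`π^A(θ) = -e^{θ-θ₀} log(1-e^{θ₀-θ}) - 1` on `(θ₀,∞)` is a probability density:
positive, strictly decreasing, unbounded near `θ₀`, and integrating to `1`. -/
theorem arithmetic_intrinsic_prior_density (θ₀ : ℝ) :
    (∀ θ, θ₀ < θ →
      0 < -Real.exp (θ - θ₀) * Real.log (1 - Real.exp (θ₀ - θ)) - 1) ∧
    StrictAntiOn (fun θ => -Real.exp (θ - θ₀) * Real.log (1 - Real.exp (θ₀ - θ)) - 1)
      (Set.Ioi θ₀) ∧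
    Tendsto (fun θ => -Real.exp (θ - θ₀) * Real.log (1 - Real.exp (θ₀ - θ)) - 1)
      (nhdsWithin θ₀ (Set.Ioi θ₀)) atTop ∧
    (∫ θ in Set.Ioi θ₀,
        (-Real.exp (θ - θ₀) * Real.log (1 - Real.exp (θ₀ - θ)) - 1)) = 1 := by
  simp only [← arithmeticPrior_exp_const_sub]
  refine ⟨fun θ hθ => ?_, ?_, ?_, integral_arithmeticPrior_exp_const_sub θ₀⟩
  · exact arithmeticPrior_pos (exp_const_sub_mem_Ioo hθ).1 (exp_const_sub_mem_Ioo hθ).2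
  · exact strictMonoOn_arithmeticPrior.comp_strictAntiOn
      ((strictAnti_exp_const_sub θ₀).strictAntiOn _) fun θ hθ => exp_const_sub_mem_Ioo hθ
  · exact tendsto_arithmeticPrior_nhdsLT_one.comp (tendsto_exp_const_sub_nhdsGT θ₀)
end

section
/- The density π^A(θ) = -e^{θ-θ₀} log(1 - e^{θ₀-θ}) - 1 on (θ₀,∞) satisfies ∫_{θ₀}^∞ e^{θ} π^A(θ) dθ = ∞ (condition (irrcs) with k = 1), and hence yields evidence-consistent Bayes factors for all n ≥ 1. -/
open Real MeasureTheory Set Filter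

/-! With `u = e^{θ₀-θ} ∈ (0,1)` the prior is `-log(1-u)/u - 1`, and the first two terms of the
series `-log(1-u) = u + u²/2 + ⋯` give `π^A(θ) ≥ e^{θ₀-θ}/2`. Hence `e^θ π^A(θ) ≥ e^{θ₀}/2` and
`e^{n(θ-θ₀)} π^A(θ) ≥ 1/2` on `(θ₀,∞)`: both integrands are bounded below by positive constants
on a half-line, so neither has a finite integral. -/

theorem add_sq_div_two_le_neg_log_one_sub {u : ℝ} (h0 : 0 ≤ u) (h1 : u < 1) :
    u + u ^ 2 / 2 ≤ -log (1 - u) := by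
  have hsum := hasSum_pow_div_log_of_abs_lt_one (by rwa [abs_of_nonneg h0])
  have := sum_le_hasSum (Finset.range 2) (fun i _ => by positivity) hsum
  norm_num [Finset.sum_range_succ] at this
  linarith

theorem not_integrableOn_of_pos_le {α : Type*} [MeasurableSpace α] {μ : Measure α}
    {s : Set α} {f : α → ℝ} {c : ℝ} (hs : MeasurableSet s) (hμs : μ s = ⊤) (hc : 0 < c)
    (hf : ∀ x ∈ s, c ≤ f x) : ¬ IntegrableOn f s μ := by
  intro hfs
  have hconst : IntegrableOn (fun _ => c) s μ :=
    hfs.mono' aestronglyMeasurable_const <| (ae_restrict_mem hs).mono fun x hx => by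
      rw [norm_of_nonneg hc.le]; exact hf x hx
  rw [integrableOn_const_iff, hμs] at hconst
  simp [hc.ne'] at hconst

theorem tendsto_setLIntegral_Ioc_atTop_of_pos_le {f : ℝ → ℝ} {a c : ℝ} (hc : 0 < c)
    (hf : ∀ x ∈ Ioi a, c ≤ f x) :
    Tendsto (fun T => ∫⁻ x in Ioc a T, ENNReal.ofReal (f x)) atTop (nhds ⊤) := by
  have hlin : Tendsto (fun T => ENNReal.ofReal (c * (T - a))) atTop (nhds ⊤) := by
    refine ENNReal.tendsto_ofReal_atTop.comp (Tendsto.const_mul_atTop hc ?_)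
    simpa only [sub_eq_add_neg, id] using tendsto_atTop_add_const_right atTop (-a) tendsto_id
  refine tendsto_nhds_top_mono hlin (Eventually.of_forall fun T => ?_)
  calc ENNReal.ofReal (c * (T - a)) = ∫⁻ _ in Ioc a T, ENNReal.ofReal c := by
        rw [setLIntegral_const, Real.volume_Ioc, ENNReal.ofReal_mul hc.le]
    _ ≤ ∫⁻ x in Ioc a T, ENNReal.ofReal (f x) :=
        setLIntegral_mono' measurableSet_Ioc fun x hx => ENNReal.ofReal_le_ofReal (hf x hx.1)

noncomputable def arithmeticIntrinsicPrior (θ₀ θ : ℝ) : ℝ :=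
  -exp (θ - θ₀) * log (1 - exp (θ₀ - θ)) - 1

section arithmeticIntrinsicPrior

variable {θ₀ θ : ℝ}

theorem exp_sub_div_two_le_arithmeticIntrinsicPrior (h : θ₀ < θ) :
    exp (θ₀ - θ) / 2 ≤ arithmeticIntrinsicPrior θ₀ θ := by
  set u := exp (θ₀ - θ)
  have hu1 : u < 1 := exp_lt_one_iff.mpr (by linarith)
  have hinv : exp (θ - θ₀) * u = 1 := by rw [← exp_add]; simp
  calc u / 2 = exp (θ - θ₀) * (u + u ^ 2 / 2) - 1 := by linear_combination -(1 + u / 2) * hinv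
    _ ≤ exp (θ - θ₀) * -log (1 - u) - 1 := by
      gcongr; exact add_sq_div_two_le_neg_log_one_sub (exp_pos _).le hu1
    _ = arithmeticIntrinsicPrior θ₀ θ := by unfold arithmeticIntrinsicPrior; ring

theorem exp_div_two_le_exp_mul_arithmeticIntrinsicPrior (h : θ₀ < θ) :
    exp θ₀ / 2 ≤ exp θ * arithmeticIntrinsicPrior θ₀ θ :=
  calc exp θ₀ / 2 = exp θ * (exp (θ₀ - θ) / 2) := by rw [exp_sub]; field_simp
    _ ≤ exp θ * arithmeticIntrinsicPrior θ₀ θ :=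
      mul_le_mul_of_nonneg_left (exp_sub_div_two_le_arithmeticIntrinsicPrior h) (exp_pos θ).le

theorem half_le_exp_mul_arithmeticIntrinsicPrior {k : ℝ} (hk : 1 ≤ k) (h : θ₀ < θ) :
    1 / 2 ≤ exp (k * (θ - θ₀)) * arithmeticIntrinsicPrior θ₀ θ :=
  calc 1 / 2 ≤ exp ((k - 1) * (θ - θ₀)) / 2 := by
        gcongr; exact one_le_exp (mul_nonneg (by linarith) (by linarith))
    _ = exp (k * (θ - θ₀)) * (exp (θ₀ - θ) / 2) := by rw [← mul_div_assoc, ← exp_add]; ring_nf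
    _ ≤ exp (k * (θ - θ₀)) * arithmeticIntrinsicPrior θ₀ θ :=
      mul_le_mul_of_nonneg_left (exp_sub_div_two_le_arithmeticIntrinsicPrior h) (exp_pos _).le

end arithmeticIntrinsicPrior

/-- The density `π^A(θ) = -e^{θ-θ₀} log(1-e^{θ₀-θ}) - 1` on `(θ₀,∞)` satisfies
`∫_{θ₀}^∞ e^θ π^A(θ) dθ = ∞` (condition (irrcs) with `k = 1`), and hence yields
evidence-consistent Bayes factors for all `n ≥ 1`. -/
theorem arithmetic_intrinsic_prior_evidence_consistent (θ₀ : ℝ) :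
    ¬ IntegrableOn
        (fun θ : ℝ => Real.exp θ *
          (-Real.exp (θ - θ₀) * Real.log (1 - Real.exp (θ₀ - θ)) - 1))
        (Set.Ioi θ₀) ∧
    ∀ n : ℕ, 1 ≤ n →
      Tendsto (fun T : ℝ =>
          ∫⁻ θ in Set.Ioc θ₀ T, ENNReal.ofReal (Real.exp ((n:ℝ) * (θ - θ₀)) *
            (-Real.exp (θ - θ₀) * Real.log (1 - Real.exp (θ₀ - θ)) - 1)))
        atTop (nhds ⊤) :=
  ⟨not_integrableOn_of_pos_le measurableSet_Ioi volume_Ioi (half_pos (exp_pos θ₀))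
      fun _ hθ => exp_div_two_le_exp_mul_arithmeticIntrinsicPrior hθ,
    fun _ hn => tendsto_setLIntegral_Ioc_atTop_of_pos_le one_half_pos
      fun _ hθ => half_le_exp_mul_arithmeticIntrinsicPrior (by exact_mod_cast hn) hθ⟩
end

section
/- In the normal mixture model, the Laplace-approximated unitary divergence D̄^{SL}(μ) = log[ (1 + r e^{μ²/2}) / (1 + r e^{-μ²/2}) ] with r = (1-p)/p satisfies: D̄^{SL}(μ) ≥ 0 with equality iff μ = 0; D̄^{SL}(μ)/μ² → 1/2 as |μ| → ∞; and D̄^{SL}(μ) = (1-p)μ² + o(μ²) as μ → 0. -/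
open Real Filter

lemma mld_aux_top (r : ℝ) (hr : 0 < r) :
    Tendsto (fun t : ℝ =>
      (Real.log (1 + r * Real.exp t) - Real.log (1 + r * Real.exp (-t))) / (2*t))
      atTop (nhds (1/2)) := by
  have hexp : Tendsto (fun t : ℝ => Real.exp (-t)) atTop (nhds 0) :=
    Real.tendsto_exp_comp_nhds_zero.2 tendsto_neg_atTop_atBot
  have h1 : Tendsto (fun t : ℝ => Real.exp (-t) + r) atTop (nhds r) := by
    simpa using hexp.add_const r
  have h2 : Tendsto (fun t : ℝ => 1 + r * Real.exp (-t)) atTop (nhds 1) := by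
    simpa using (hexp.const_mul r).const_add 1
  have hg : Tendsto (fun t : ℝ =>
      Real.log (Real.exp (-t) + r) - Real.log (1 + r * Real.exp (-t))) atTop
      (nhds (Real.log r - Real.log 1)) :=
    ((Real.continuousAt_log hr.ne').tendsto.comp h1).sub
      ((Real.continuousAt_log one_ne_zero).tendsto.comp h2)
  have hz : Tendsto (fun t : ℝ =>
      (Real.log (Real.exp (-t) + r) - Real.log (1 + r * Real.exp (-t))) * (2*t)⁻¹)
      atTop (nhds 0) := by
    have := hg.mul (tendsto_inv_atTop_zero.comp (tendsto_id.const_mul_atTop two_pos))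
    simpa using this
  have hlim : Tendsto (fun t : ℝ => 1/2 +
      (Real.log (Real.exp (-t) + r) - Real.log (1 + r * Real.exp (-t))) * (2*t)⁻¹)
      atTop (nhds (1/2)) := by
    simpa using hz.const_add (1/2 : ℝ)
  refine hlim.congr' ?_
  filter_upwards [eventually_gt_atTop (0:ℝ)] with t ht
  have hB : (0:ℝ) < 1 + r * Real.exp (-t) := by positivity
  have hC : (0:ℝ) < Real.exp (-t) + r := by positivity
  have hfa : Real.log (1 + r * Real.exp t) = t + Real.log (Real.exp (-t) + r) := by
    have : 1 + r * Real.exp t = Real.exp t * (Real.exp (-t) + r) := by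
      rw [mul_add, ← Real.exp_add]; simp [add_comm, mul_comm]
    rw [this, Real.log_mul (Real.exp_ne_zero t) hC.ne', Real.log_exp]
  rw [hfa]
  field_simp
  ring

lemma mld_aux_slope (r : ℝ) (hr : 0 < r) :
    Tendsto (fun t : ℝ =>
      (Real.log (1 + r * Real.exp t) - Real.log (1 + r * Real.exp (-t))) / (2*t))
      (nhdsWithin 0 {(0:ℝ)}ᶜ) (nhds (r/(1+r))) := by
  set f : ℝ → ℝ := fun t => Real.log (1 + r * Real.exp t) with hf
  have hd : HasDerivAt f (r / (1 + r)) 0 := by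
    have h1 : HasDerivAt (fun t : ℝ => 1 + r * Real.exp t) (r * Real.exp 0) 0 := by
      simpa using ((Real.hasDerivAt_exp 0).const_mul r).const_add 1
    have hne : (1 : ℝ) + r * Real.exp 0 ≠ 0 := by positivity
    have := h1.log hne
    simpa using this
  have hslope : Tendsto (slope f 0) (nhdsWithin 0 {(0:ℝ)}ᶜ) (nhds (r/(1+r))) :=
    hasDerivAt_iff_tendsto_slope.mp hd
  have hneg : Tendsto (fun t : ℝ => -t) (nhdsWithin 0 {(0:ℝ)}ᶜ)
      (nhdsWithin 0 {(0:ℝ)}ᶜ) := by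
    apply tendsto_nhdsWithin_of_tendsto_nhds_of_eventually_within
    · simpa using (continuous_neg.tendsto (0:ℝ)).mono_left nhdsWithin_le_nhds
    · filter_upwards [self_mem_nhdsWithin] with t ht
      simpa using ht
  have h2 : Tendsto (fun t : ℝ => slope f 0 (-t)) (nhdsWithin 0 {(0:ℝ)}ᶜ)
      (nhds (r/(1+r))) := hslope.comp hneg
  have hsum : Tendsto (fun t : ℝ => (slope f 0 t + slope f 0 (-t)) / 2)
      (nhdsWithin 0 {(0:ℝ)}ᶜ) (nhds (r/(1+r))) := by
    have := (hslope.add h2).div_const 2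
    have heq : (r/(1+r) + r/(1+r)) / 2 = r/(1+r) := by ring
    rwa [heq] at this
  refine hsum.congr' ?_
  filter_upwards [self_mem_nhdsWithin] with t ht
  have ht0 : t ≠ 0 := ht
  simp only [slope_def_field, sub_zero]
  rw [div_add_div _ _ ht0 (neg_ne_zero.mpr ht0)]
  rw [div_div]
  rw [div_eq_div_iff (by simp [ht0] : t * -t * 2 ≠ 0) (by simp [ht0] : 2 * t ≠ 0)]
  show _ = (f t - f (-t)) * (t * -t * 2)
  ring

set_option maxHeartbeats 4000000 in
/-- In the normal mixture model, the Laplace-approximated unitary divergence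
`D̄^{SL}(μ) = log[(1 + r e^{μ²/2})/(1 + r e^{-μ²/2})]` with `r = (1-p)/p`
satisfies: it is nonnegative, vanishing iff `μ = 0`; `D̄^{SL}(μ)/μ² → 1/2` as
`|μ| → ∞`; and `D̄^{SL}(μ) = (1-p)μ² + o(μ²)` as `μ → 0`. -/
theorem mixture_laplace_divergence (p : ℝ) (hp : p ∈ Set.Ioo (0:ℝ) 1) :
    let r := (1 - p) / p
    let D : ℝ → ℝ := fun μ =>
      Real.log ((1 + r * Real.exp (μ^2/2)) / (1 + r * Real.exp (-(μ^2)/2)))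
    (∀ μ, 0 ≤ D μ) ∧ (∀ μ, D μ = 0 ↔ μ = 0) ∧
    Tendsto (fun μ => D μ / μ^2) atTop (nhds (1/2)) ∧
    Tendsto (fun μ => D μ / μ^2) atBot (nhds (1/2)) ∧
    Tendsto (fun μ => D μ / μ^2) (nhdsWithin 0 {(0:ℝ)}ᶜ) (nhds (1 - p)) := by
  obtain ⟨hp0, hp1⟩ := hp
  intro r D
  have hr : 0 < r := div_pos (by linarith) hp0
  have hA : ∀ μ : ℝ, (0:ℝ) < 1 + r * Real.exp (μ^2/2) := fun μ => by positivity
  have hB : ∀ μ : ℝ, (0:ℝ) < 1 + r * Real.exp (-(μ^2)/2) := fun μ => by positivity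
  have hBA : ∀ μ : ℝ, 1 + r * Real.exp (-(μ^2)/2) ≤ 1 + r * Real.exp (μ^2/2) := by
    intro μ
    have h1 : Real.exp (-(μ^2)/2) ≤ Real.exp (μ^2/2) :=
      Real.exp_le_exp.2 (by nlinarith [sq_nonneg μ])
    nlinarith
  have hDdef : ∀ μ : ℝ, D μ = Real.log (1 + r * Real.exp (μ^2/2))
      - Real.log (1 + r * Real.exp (-(μ^2)/2)) := by
    intro μ
    show Real.log _ = _
    rw [Real.log_div (hA μ).ne' (hB μ).ne']
  have hDeq : (fun μ : ℝ => D μ / μ^2) = ((fun t : ℝ =>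
      (Real.log (1 + r * Real.exp t) - Real.log (1 + r * Real.exp (-t))) / (2*t))
      ∘ (fun μ : ℝ => μ^2/2)) := by
    funext μ
    simp only [Function.comp, hDdef μ]
    have h1 : -(μ^2/2) = -(μ^2)/2 := by ring
    have h2 : 2 * (μ^2/2) = μ^2 := by ring
    rw [h1, h2]
  have hval : r / (1 + r) = 1 - p := by
    have hr1 : (1:ℝ) + r = 1/p := by
      show (1:ℝ) + (1-p)/p = 1/p
      field_simp
      ring
    rw [hr1]
    show (1-p)/p / (1/p) = 1-p
    field_simp
  have hsqTop : Tendsto (fun μ : ℝ => μ^2/2) atTop atTop :=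
    Tendsto.atTop_div_const two_pos (tendsto_pow_atTop two_ne_zero)
  have hsqBot : Tendsto (fun μ : ℝ => μ^2/2) atBot atTop := by
    refine Tendsto.atTop_div_const two_pos ?_
    have h := (tendsto_pow_atTop (n := 2) two_ne_zero).comp (tendsto_neg_atBot_atTop : Tendsto (fun x:ℝ => -x) atBot atTop)
    refine h.congr fun μ => ?_
    simp [Function.comp, neg_pow]
  have hsq0 : Tendsto (fun μ : ℝ => μ^2/2) (nhdsWithin 0 {(0:ℝ)}ᶜ)
      (nhdsWithin 0 {(0:ℝ)}ᶜ) := by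
    apply tendsto_nhdsWithin_of_tendsto_nhds_of_eventually_within
    · have hc : ContinuousAt (fun μ : ℝ => μ^2/2) 0 := by fun_prop
      simpa using hc.tendsto.mono_left nhdsWithin_le_nhds
    · filter_upwards [self_mem_nhdsWithin] with μ hμ
      have hμ0 : μ ≠ 0 := hμ
      simp only [Set.mem_compl_iff, Set.mem_singleton_iff]
      positivity
  refine ⟨?_, ?_, ?_, ?_, ?_⟩
  · intro μ
    exact Real.log_nonneg ((one_le_div (hB μ)).2 (hBA μ))
  · intro μ
    constructor
    · intro h
      have hpos : (0:ℝ) < (1 + r * Real.exp (μ^2/2)) / (1 + r * Real.exp (-(μ^2)/2)) :=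
        div_pos (hA μ) (hB μ)
      rcases Real.log_eq_zero.mp h with h1 | h1 | h1
      · exact absurd h1 hpos.ne'
      · have hAB : 1 + r * Real.exp (μ^2/2) = 1 + r * Real.exp (-(μ^2)/2) :=
          (div_eq_one_iff_eq (hB μ).ne').mp h1
        have hexp : Real.exp (μ^2/2) = Real.exp (-(μ^2)/2) :=
          mul_left_cancel₀ hr.ne' (by linarith)
        have h2 : μ^2/2 = -(μ^2)/2 := Real.exp_injective hexp
        have h3 : μ^2 = 0 := by linarith
        exact pow_eq_zero_iff two_ne_zero |>.mp h3
      · rw [h1] at hpos; linarith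
    · intro h
      subst h
      rw [hDdef]
      norm_num
  · rw [hDeq]; exact (mld_aux_top r hr).comp hsqTop
  · rw [hDeq]; exact (mld_aux_top r hr).comp hsqBot
  · rw [hDeq]
    have h := mld_aux_slope r hr
    rw [hval] at h
    exact h.comp hsq0
end

section
/- The function π(μ) ∝ (1 + log[(1 + r e^{μ²/2})/(1 + r e^{-μ²/2})])^{-1} is integrable on ℝ (so the approximate sum-DB prior π^{SL} for the mixture model is proper), and it is symmetric about 0 with mode at 0. -/
/-!
Writing `L(t) = log ((1 + r eᵗ) / (1 + r e⁻ᵗ))`, the prior is `(1 + L(μ²/2))⁻¹`. Since `t ↦ eᵗ`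
is increasing, `L(t) > 0 = L(0)` for `t > 0`, which gives the strict mode at `0`; symmetry is
immediate because only `μ²` occurs. For integrability, the numerator is at least `r eᵗ` and the
denominator at most `1 + r` when `t ≥ 0`, so `L(t) ≥ t - log ((1 + r) / r)`: the prior decays
like `2 / μ²` and is dominated by a multiple of `(1 + μ²)⁻¹`.
-/

open Real MeasureTheory

noncomputable def mixtureLogRatio (r t : ℝ) : ℝ :=
  log ((1 + r * exp t) / (1 + r * exp (-t)))

section mixtureLogRatio

variable {r t : ℝ}

theorem mixtureLogRatio_zero (r : ℝ) : mixtureLogRatio r 0 = 0 := by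
  by_cases h : 1 + r = 0 <;> simp [mixtureLogRatio, h]

theorem mixtureLogRatio_nonneg (hr : 0 ≤ r) (ht : 0 ≤ t) : 0 ≤ mixtureLogRatio r t := by
  refine log_nonneg ((one_le_div (by positivity)).2 ?_)
  gcongr
  linarith

theorem mixtureLogRatio_pos (hr : 0 < r) (ht : 0 < t) : 0 < mixtureLogRatio r t := by
  refine log_pos ((one_lt_div (by positivity)).2 ?_)
  gcongr
  linarith

theorem sub_log_le_mixtureLogRatio (hr : 0 < r) (ht : 0 ≤ t) :
    t - log ((1 + r) / r) ≤ mixtureLogRatio r t := by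
  have hexp : exp t * exp (-t) = 1 := by rw [← exp_add, add_neg_cancel, exp_zero]
  have hone : 1 ≤ exp t := one_le_exp ht
  rw [mixtureLogRatio, le_log_iff_exp_le (by positivity), exp_sub, exp_log (by positivity),
    div_div_eq_mul_div, div_le_div_iff₀ (by positivity) (by positivity)]
  nlinarith [mul_le_mul_of_nonneg_left hone (sq_nonneg r)]

theorem continuous_mixtureLogRatio (hr : 0 ≤ r) : Continuous (mixtureLogRatio r) :=
  Continuous.log (by fun_prop (disch := intro; positivity)) fun _ => by positivity

end mixtureLogRatio

theorem integrable_inv_one_add_of_sq_div_two_sub_le {L : ℝ → ℝ} {c : ℝ} (hL : Measurable L)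
    (hc : 0 ≤ c) (h0 : ∀ x, 0 ≤ L x) (hsq : ∀ x, x ^ 2 / 2 - c ≤ L x) :
    Integrable fun x => (1 + L x)⁻¹ := by
  refine (integrable_inv_one_add_sq.const_mul (2 * (1 + c))).mono
    (measurable_const.add hL).inv.aestronglyMeasurable (Filter.Eventually.of_forall fun x => ?_)
  have hpos : 0 < 1 + L x := by linarith [h0 x]
  -- `(1 + c) (1 + L) ≥ (1 + L) + c ≥ 1 + x² / 2`
  have hdom : 1 + x ^ 2 ≤ 2 * (1 + c) * (1 + L x) := by nlinarith [h0 x, hsq x]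
  rw [norm_of_nonneg (by positivity), norm_of_nonneg (by positivity), ← div_eq_mul_inv,
    inv_le_comm₀ hpos (by positivity), inv_div, div_le_iff₀ (by positivity)]
  linarith

/-- The approximate sum-DB prior kernel for the mixture model,
`π(μ) = (1 + log[(1 + r e^{μ²/2})/(1 + r e^{-μ²/2})])⁻¹` with `r = (1-p)/p`,
is integrable on `ℝ` (hence can be normalized to a proper prior), symmetric about
`0`, and has its (strict) mode at `0`. -/
theorem mixture_approxDB_proper (p : ℝ) (hp : p ∈ Set.Ioo (0:ℝ) 1) :
    let r := (1 - p) / p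
    let prior : ℝ → ℝ := fun μ =>
      (1 + Real.log ((1 + r * Real.exp (μ^2/2)) / (1 + r * Real.exp (-(μ^2)/2))))⁻¹
    Integrable prior ∧ (∀ μ, prior (-μ) = prior μ) ∧ (∀ μ : ℝ, μ ≠ 0 → prior μ < prior 0) := by
  intro r prior
  have hr : 0 < r := div_pos (by linarith [hp.2]) hp.1
  have hprior : prior = fun μ => (1 + mixtureLogRatio r (μ ^ 2 / 2))⁻¹ := by
    funext μ
    simp only [prior, mixtureLogRatio, neg_div]
  rw [hprior]
  refine ⟨?_, fun μ => by simp only [neg_sq], fun μ hμ => ?_⟩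
  · exact integrable_inv_one_add_of_sq_div_two_sub_le
      ((continuous_mixtureLogRatio hr.le).measurable.comp (by fun_prop))
      (log_nonneg ((one_le_div hr).2 (by linarith)))
      (fun μ => mixtureLogRatio_nonneg hr.le (by positivity))
      (fun μ => sub_log_le_mixtureLogRatio hr (by positivity))
  · simp only [ne_eq, OfNat.ofNat_ne_zero, not_false_eq_true, zero_pow, zero_div,
      mixtureLogRatio_zero, add_zero, inv_one]
    exact inv_lt_one_of_one_lt₀ (lt_add_of_pos_right 1 (mixtureLogRatio_pos hr (by positivity)))
end

section
/- (Invariance of DB priors, no nuisance parameters.) Let ξ: Θ → Ξ be a smooth bijection with nonvanishing Jacobian, and suppose the base priors satisfy π_θ^N(θ) ∝ π_ξ^N(ξ(θ))|J_ξ(θ)| and the unitary divergence is reparameterization-invariant: D̄*[ξ(θ), ξ(θ₀)] = D̄[θ, θ₀]. Then the DB priors π_θ^D(θ) = c^{-1} h(D̄[θ,θ₀]) π_θ^N(θ) and π_ξ^D(ξ) = c*^{-1} h(D̄*[ξ,ξ₀]) π_ξ^N(ξ) (each normalized to integrate to 1) satisfy π_θ^D(θ) = π_ξ^D(ξ(θ))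 |J_ξ(θ)| for all θ. -/
open Real MeasureTheory

theorem integral_abs_deriv_smul_comp_of_bijective {E : Type*} [NormedAddCommGroup E]
    [NormedSpace ℝ E] {ξ : ℝ → ℝ} (hbij : Function.Bijective ξ) (hξ : Differentiable ℝ ξ)
    (g : ℝ → E) : ∫ x, |deriv ξ x| • g (ξ x) = ∫ y, g y := by
  have h := integral_image_eq_integral_abs_deriv_smul MeasurableSet.univ
    (fun x _ => (hξ x).hasDerivAt.hasDerivWithinAt) hbij.1.injOn g
  rwa [Set.image_univ, hbij.2.range_eq, setIntegral_univ, setIntegral_univ, eq_comm] at h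

theorem DB_prior_invariance_general
    (h : ℝ → ℝ)
    (ξ : ℝ → ℝ) (hbij : Function.Bijective ξ) (hsm : ContDiff ℝ 1 ξ)
    (θ₀ : ℝ) (D Dstar : ℝ → ℝ → ℝ)
    (hinvD : ∀ θ, Dstar (ξ θ) (ξ θ₀) = D θ θ₀)
    (prθN prξN : ℝ → ℝ) (κ : ℝ)
    (hrel : ∀ θ, prθN θ = κ * prξN (ξ θ) * |deriv ξ θ|)
    (c cstar : ℝ)
    (hc : c = ∫ θ, h (D θ θ₀) * prθN θ) (hcpos : 0 < c)
    (hcs : cstar = ∫ x, h (Dstar x (ξ θ₀)) * prξN x) :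
    ∀ θ, c⁻¹ * (h (D θ θ₀) * prθN θ)
        = (cstar⁻¹ * (h (Dstar (ξ θ) (ξ θ₀)) * prξN (ξ θ))) * |deriv ξ θ| := by
  have hc_eq : c = κ * cstar := by
    rw [hc, hcs, ← integral_abs_deriv_smul_comp_of_bijective hbij
      (hsm.differentiable one_ne_zero) (fun x => h (Dstar x (ξ θ₀)) * prξN x),
      ← integral_const_mul]
    congr with θ
    rw [hrel, hinvD, smul_eq_mul]
    ring
  have hκ : κ ≠ 0 := left_ne_zero_of_mul (hc_eq ▸ hcpos.ne')
  have hcstar : cstar ≠ 0 := right_ne_zero_of_mul (hc_eq ▸ hcpos.ne')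
  intro θ
  rw [hrel θ, hinvD θ, hc_eq]
  field_simp

/-- Invariance of DB priors (no nuisance parameters): if the base priors satisfy
`pr_θ^N(θ) = κ·pr_ξ^N(ξ(θ))·|J_ξ(θ)|` for a smooth bijection `ξ` with nonvanishing
Jacobian, and the unitary divergence is reparameterization invariant, then the
normalized DB priors satisfy `pr_θ^D(θ) = pr_ξ^D(ξ(θ))·|J_ξ(θ)|`. -/
theorem DB_prior_invariance
    (h : ℝ → ℝ) (hpos : ∀ t, 0 ≤ t → 0 < h t) (hanti : AntitoneOn h (Set.Ici 0))
    (ξ : ℝ → ℝ) (hbij : Function.Bijective ξ) (hsm : ContDiff ℝ 1 ξ)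
    (hJ : ∀ θ, deriv ξ θ ≠ 0)
    (θ₀ : ℝ) (D Dstar : ℝ → ℝ → ℝ)
    (hD0 : ∀ θ θ', 0 ≤ D θ θ') (hDs0 : ∀ x x', 0 ≤ Dstar x x')
    (hinvD : ∀ θ, Dstar (ξ θ) (ξ θ₀) = D θ θ₀)
    (prθN prξN : ℝ → ℝ) (κ : ℝ) (hκ : 0 < κ)
    (hrel : ∀ θ, prθN θ = κ * prξN (ξ θ) * |deriv ξ θ|)
    (c cstar : ℝ)
    (hci : Integrable (fun θ => h (D θ θ₀) * prθN θ))
    (hc : c = ∫ θ, h (D θ θ₀) * prθN θ) (hcpos : 0 < c)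
    (hcsi : Integrable (fun x => h (Dstar x (ξ θ₀)) * prξN x))
    (hcs : cstar = ∫ x, h (Dstar x (ξ θ₀)) * prξN x) (hcspos : 0 < cstar) :
    ∀ θ, c⁻¹ * (h (D θ θ₀) * prθN θ)
        = (cstar⁻¹ * (h (Dstar (ξ θ) (ξ θ₀)) * prξN (ξ θ))) * |deriv ξ θ| :=
  DB_prior_invariance_general h ξ hbij hsm θ₀ D Dstar hinvD prθN prξN κ hrel c cstar hc hcpos hcs
end
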